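/- arXiv:1806.10406 — 3 statements merged into one kernel-verified Lean document; each statement's English description precedes it below -/
import Mathlib

section
/- Let k ≥ 1 be an integer and β(1),…,β(k) real numbers, with f, B and r as defined. Define for t ≥ 2 the iterated integral I(t) = ∫₁^t u₁^{β(1)} ( ∫_{u₁}^t u₂^{β(2)} ( ⋯ ( ∫_{u_{k−1}}^t u_k^{β(k)} du_k ) ⋯ ) du₂ ) du₁. Then there exists a constant C₂ < ∞ such that I(t) ≤ C₂ · t^{k+B} (log t)^{r−1} for all t ≥ 2. -/
open Finset Real MeasureTheory intervalIntegral

/-- `f k β s = -s + ∑_{i=s+1}^k β i`. -/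
noncomputable def maxF (k : ℕ) (β : ℕ → ℝ) (s : ℕ) : ℝ :=
  -(s : ℝ) + ∑ i ∈ Finset.Icc (s + 1) k, β i

/-- `B = max_{s ∈ {0,…,k}} f s`. -/
noncomputable def maxB (k : ℕ) (β : ℕ → ℝ) : ℝ :=
  (Finset.range (k + 1)).sup' (by simp) (maxF k β)

/-- `r` = number of maximizers of `f` on `{0,…,k}`. -/
noncomputable def numMax (k : ℕ) (β : ℕ → ℝ) : ℕ :=
  ((Finset.range (k + 1)).filter fun s => maxF k β s = maxB k β).card

/-- `nestInt β t n j a` is the iterated integral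
`∫_a^t u_j^{β j} ( ∫_{u_j}^t u_{j+1}^{β (j+1)} ( ⋯ ) du_{j+1} ) du_j` with `n` integrals. -/
noncomputable def nestInt (β : ℕ → ℝ) (t : ℝ) : ℕ → ℕ → ℝ → ℝ
  | 0, _, _ => 1
  | n + 1, j, a => ∫ u in a..t, u ^ β j * nestInt β t n (j + 1) u


/-!
Peeling off the outermost integral, `nestInt β x n (s + 1) a` with `s + n = k` is at most
`C x^(k + M) a^(f s - M) (1 + log (x / a))^(R - 1)`, where `f = maxF k β` and `M`, `R` are the
maximum of `f` on `{s, …, k}` and the number of its maximizers. The induction step integrates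
`u^(e - 1) (1 + log (x / u))^m` over `[a, x]` with `e = f s - M`: for `e < 0` this is `O(a^e)`,
for `e = 0` it gains one factor `1 + log (x / a)`, and for `e > 0` it is `O(x^e)`; these match how
the maximum and the number of maximizers change when `s` joins the window. Taking `a = 1` gives the
theorem, because `1 + log t ≤ (1 + (log 2)⁻¹) log t` for `t ≥ 2`.
-/

lemma intervalIntegral.integral_mono_on_of_nonneg {f g : ℝ → ℝ} {a b : ℝ} (hab : a ≤ b)
    (hf : ∀ x ∈ Set.Icc a b, 0 ≤ f x) (hg : IntervalIntegrable g volume a b)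
    (h : ∀ x ∈ Set.Icc a b, f x ≤ g x) :
    ∫ x in a..b, f x ≤ ∫ x in a..b, g x := by
  rw [integral_of_le hab, integral_of_le hab]
  refine integral_mono_of_nonneg ?_ hg.1 ?_
  · exact ae_restrict_of_forall_mem measurableSet_Ioc fun x hx => hf x (Set.Ioc_subset_Icc_self hx)
  · exact ae_restrict_of_forall_mem measurableSet_Ioc fun x hx => h x (Set.Ioc_subset_Icc_self hx)

section WindowMax

variable (f : ℕ → ℝ)

noncomputable def windowMax (s n : ℕ) : ℝ :=
  (Icc s (s + n)).sup' (nonempty_Icc.2 (Nat.le_add_right s n)) f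

noncomputable def windowMaxCount (s n : ℕ) : ℕ :=
  #{i ∈ Icc s (s + n) | f i = windowMax f s n}

lemma Icc_add_succ_eq_insert_Icc (s n : ℕ) :
    Icc s (s + (n + 1)) = insert s (Icc (s + 1) (s + 1 + n)) := by
  rw [show s + 1 + n = s + (n + 1) by omega, insert_Icc_add_one_left_eq_Icc (by omega)]

lemma windowMax_zero (s : ℕ) : windowMax f s 0 = f s := by
  simp [windowMax]

lemma windowMaxCount_zero (s : ℕ) : windowMaxCount f s 0 = 1 := by
  rw [windowMaxCount, windowMax_zero, add_zero, Icc_self, filter_singleton, if_pos rfl,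
    card_singleton]

lemma windowMax_succ (s n : ℕ) :
    windowMax f s (n + 1) = max (f s) (windowMax f (s + 1) n) := by
  rw [windowMax, sup'_congr _ (Icc_add_succ_eq_insert_Icc s n) fun _ _ => rfl, sup'_insert]
  rfl

lemma le_windowMax {s n i : ℕ} (hi : i ∈ Icc s (s + n)) : f i ≤ windowMax f s n :=
  le_sup' f hi

lemma windowMaxCount_pos (s n : ℕ) : 0 < windowMaxCount f s n := by
  obtain ⟨i, hi, hmax⟩ := exists_mem_eq_sup' (nonempty_Icc.2 (Nat.le_add_right s n)) f
  exact card_pos.2 ⟨i, mem_filter.2 ⟨hi, hmax.symm⟩⟩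

lemma windowMaxCount_succ_of_lt {s n : ℕ} (h : f s < windowMax f (s + 1) n) :
    windowMaxCount f s (n + 1) = windowMaxCount f (s + 1) n := by
  rw [windowMaxCount, windowMax_succ, max_eq_right h.le, Icc_add_succ_eq_insert_Icc, filter_insert,
    if_neg h.ne, windowMaxCount]

lemma windowMaxCount_succ_of_eq {s n : ℕ} (h : f s = windowMax f (s + 1) n) :
    windowMaxCount f s (n + 1) = windowMaxCount f (s + 1) n + 1 := by
  rw [windowMaxCount, windowMax_succ, ← h, max_self, Icc_add_succ_eq_insert_Icc, filter_insert,
    if_pos rfl, card_insert_of_notMem (by simp), windowMaxCount, h]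

lemma windowMaxCount_succ_of_gt {s n : ℕ} (h : windowMax f (s + 1) n < f s) :
    windowMaxCount f s (n + 1) = 1 := by
  rw [windowMaxCount, windowMax_succ, max_eq_left h.le, Icc_add_succ_eq_insert_Icc, filter_insert,
    if_pos rfl, filter_false_of_mem fun i hi => ((le_windowMax f hi).trans_lt h).ne]
  rfl

end WindowMax

lemma maxB_eq_windowMax (k : ℕ) (β : ℕ → ℝ) : maxB k β = windowMax (maxF k β) 0 k :=
  sup'_congr _ (by rw [zero_add, Nat.range_succ_eq_Icc_zero]) fun _ _ => rfl

lemma numMax_eq_windowMaxCount (k : ℕ) (β : ℕ → ℝ) :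
    numMax k β = windowMaxCount (maxF k β) 0 k := by
  rw [numMax, windowMaxCount, maxB_eq_windowMax, zero_add, Nat.range_succ_eq_Icc_zero]

lemma maxF_self (k : ℕ) (β : ℕ → ℝ) : maxF k β k = -k := by
  simp [maxF]

lemma maxF_eq_maxF_succ_add {k s : ℕ} (β : ℕ → ℝ) (hs : s < k) :
    maxF k β s = maxF k β (s + 1) + (β (s + 1) + 1) := by
  rw [maxF, maxF, ← insert_Icc_add_one_left_eq_Icc (show s + 1 ≤ k by omega), sum_insert (by simp)]
  push_cast
  ring

section LogKernel

variable {a u x : ℝ}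

lemma one_le_one_add_log_div (hu : 0 < u) (hux : u ≤ x) : 1 ≤ 1 + log (x / u) := by
  have := log_nonneg ((one_le_div hu).2 hux)
  linarith

lemma one_add_log_div_le (ha : 0 < a) (hau : a ≤ u) (hux : u ≤ x) :
    1 + log (x / u) ≤ 1 + log (x / a) := by
  have hx : 0 < x := by linarith
  have := log_le_log (div_pos hx (by linarith)) (div_le_div_of_nonneg_left hx.le ha hau)
  linarith

lemma one_add_log_le_mul_rpow {ε y : ℝ} (hε : 0 < ε) (hy : 1 ≤ y) :
    1 + log y ≤ (1 + ε⁻¹) * y ^ ε := by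
  have hlog := log_le_rpow_div (by linarith) hε
  have hone := one_le_rpow hy hε.le
  rw [div_eq_mul_inv] at hlog
  nlinarith

lemma one_add_log_le_mul_log {b t : ℝ} (hb : 1 < b) (hbt : b ≤ t) :
    1 + log t ≤ (1 + (log b)⁻¹) * log t := by
  have hlogb : 0 < log b := log_pos hb
  have hlog : log b ≤ log t := log_le_log (by linarith) hbt
  have : 1 ≤ log t * (log b)⁻¹ := by rwa [← div_eq_mul_inv, one_le_div hlogb]
  linarith

lemma intervalIntegrable_rpow_mul_one_add_log (e : ℝ) (m : ℕ) (ha : 0 < a) (hax : a ≤ x) :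
    IntervalIntegrable (fun u => u ^ (e - 1) * (1 + log (x / u)) ^ m) volume a x := by
  refine ContinuousOn.intervalIntegrable fun u hu => ?_
  rw [Set.uIcc_of_le hax] at hu
  have hu0 : u ≠ 0 := (ha.trans_le hu.1).ne'
  have hxu : x / u ≠ 0 := div_ne_zero (ha.trans_le (hu.1.trans hu.2)).ne' hu0
  have hpow : u ≠ 0 ∨ 0 ≤ e - 1 := Or.inl hu0
  exact ContinuousAt.continuousWithinAt (by fun_prop (disch := assumption))

lemma integral_rpow_mul_one_add_log_le (e : ℝ) (m : ℕ) (ha : 0 < a) (hax : a ≤ x) :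
    ∫ u in a..x, u ^ (e - 1) * (1 + log (x / u)) ^ m ≤
      (1 + log (x / a)) ^ m * ∫ u in a..x, u ^ (e - 1) := by
  rw [← intervalIntegral.integral_const_mul]
  refine integral_mono_on hax (intervalIntegrable_rpow_mul_one_add_log e m ha hax)
    ((intervalIntegral.intervalIntegrable_rpow (Or.inr ?_)).const_mul _) fun u hu => ?_
  · rw [Set.uIcc_of_le hax]; exact fun h => (ha.trans_le h.1).ne' rfl
  · have hu0 : 0 < u := ha.trans_le hu.1
    rw [mul_comm]
    refine mul_le_mul_of_nonneg_right (pow_le_pow_left₀ ?_ (one_add_log_div_le ha hu.1 hu.2) m)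
      (rpow_nonneg hu0.le _)
    linarith [one_le_one_add_log_div hu0 hu.2]

lemma integral_rpow_mul_one_add_log_le_of_neg {e : ℝ} (he : e < 0) (m : ℕ) (ha : 0 < a)
    (hax : a ≤ x) :
    ∫ u in a..x, u ^ (e - 1) * (1 + log (x / u)) ^ m ≤ a ^ e * (1 + log (x / a)) ^ m / -e := by
  have hint : ∫ u in a..x, u ^ (e - 1) ≤ a ^ e / -e := by
    rw [integral_rpow (Or.inr ⟨by linarith, ?_⟩), sub_add_cancel, ← neg_div_neg_eq, neg_sub]
    · gcongr
      · linarith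
      · linarith [rpow_nonneg (ha.trans_le hax).le e]
    · rw [Set.uIcc_of_le hax]; exact fun h => (ha.trans_le h.1).ne' rfl
  calc _ ≤ (1 + log (x / a)) ^ m * ∫ u in a..x, u ^ (e - 1) :=
        integral_rpow_mul_one_add_log_le e m ha hax
    _ ≤ (1 + log (x / a)) ^ m * (a ^ e / -e) := by
        gcongr
        exact pow_nonneg (by linarith [one_le_one_add_log_div ha hax]) m
    _ = _ := by ring

lemma integral_rpow_mul_one_add_log_le_of_eq_zero {e : ℝ} (he : e = 0) (m : ℕ) (ha : 0 < a)
    (hax : a ≤ x) :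
    ∫ u in a..x, u ^ (e - 1) * (1 + log (x / u)) ^ m ≤ (1 + log (x / a)) ^ (m + 1) := by
  have hx : 0 < x := ha.trans_le hax
  have hint : ∫ u in a..x, u ^ (e - 1) = log (x / a) := by
    rw [he, zero_sub, ← integral_inv_of_pos ha hx]
    exact integral_congr fun u _ => rpow_neg_one u
  have hL := one_le_one_add_log_div ha hax
  calc _ ≤ (1 + log (x / a)) ^ m * ∫ u in a..x, u ^ (e - 1) :=
        integral_rpow_mul_one_add_log_le e m ha hax
    _ ≤ (1 + log (x / a)) ^ m * (1 + log (x / a)) := by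
        rw [hint]
        gcongr
        linarith
    _ = _ := (pow_succ _ _).symm

lemma exists_integral_rpow_mul_one_add_log_le_of_pos {e : ℝ} (he : 0 < e) (m : ℕ) :
    ∃ K, 0 ≤ K ∧ ∀ a x : ℝ, 0 < a → a ≤ x →
      ∫ u in a..x, u ^ (e - 1) * (1 + log (x / u)) ^ m ≤ K * x ^ e := by
  set ε := e / (m + 1) with hε
  have hε0 : 0 < ε := by positivity
  have hεm : ε * m + ε = e := by rw [hε]; field_simp
  refine ⟨(1 + ε⁻¹) ^ m / ε, by positivity, fun a x ha hax => ?_⟩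
  have hx : 0 < x := ha.trans_le hax
  have hpt : ∀ u ∈ Set.Icc a x, u ^ (e - 1) * (1 + log (x / u)) ^ m ≤
      (1 + ε⁻¹) ^ m * x ^ (ε * m) * u ^ (ε - 1) := by
    intro u hu
    have hu0 : 0 < u := ha.trans_le hu.1
    have hlog : (1 + log (x / u)) ^ m ≤ ((1 + ε⁻¹) * (x / u) ^ ε) ^ m :=
      pow_le_pow_left₀ (by linarith [one_le_one_add_log_div hu0 hu.2])
        (one_add_log_le_mul_rpow hε0 ((one_le_div hu0).2 hu.2)) m
    calc _ ≤ u ^ (e - 1) * ((1 + ε⁻¹) * (x / u) ^ ε) ^ m := by gcongr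
      _ = (1 + ε⁻¹) ^ m * x ^ (ε * m) * (u ^ (e - 1) * u ^ (-(ε * m))) := by
        rw [mul_pow, ← rpow_natCast, ← rpow_natCast, ← rpow_mul (by positivity),
          div_rpow hx.le hu0.le, rpow_neg hu0.le]
        ring
      _ = (1 + ε⁻¹) ^ m * x ^ (ε * m) * u ^ (ε - 1) := by
        rw [← rpow_add hu0]
        congr 2
        linarith
  have hint : ∫ u in a..x, u ^ (ε - 1) ≤ x ^ ε / ε := by
    rw [integral_rpow (Or.inl (by linarith)), sub_add_cancel]
    gcongr
    linarith [rpow_nonneg ha.le ε]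
  calc _ ≤ ∫ u in a..x, (1 + ε⁻¹) ^ m * x ^ (ε * m) * u ^ (ε - 1) :=
        integral_mono_on hax (intervalIntegrable_rpow_mul_one_add_log e m ha hax)
          ((intervalIntegral.intervalIntegrable_rpow' (by linarith)).const_mul _) hpt
    _ ≤ (1 + ε⁻¹) ^ m * x ^ (ε * m) * (x ^ ε / ε) := by
        rw [intervalIntegral.integral_const_mul]
        gcongr
    _ = (1 + ε⁻¹) ^ m / ε * x ^ e := by
        rw [← hεm, rpow_add hx]
        ring

end LogKernel

section NestedIntegral

variable (β : ℕ → ℝ) {a x : ℝ}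

lemma nestInt_nonneg (n j : ℕ) (ha : 0 < a) (hax : a ≤ x) : 0 ≤ nestInt β x n j a := by
  induction n generalizing j a with
  | zero => exact zero_le_one
  | succ n ih =>
    exact integral_nonneg hax fun u hu =>
      mul_nonneg (rpow_nonneg (ha.trans_le hu.1).le _) (ih _ (ha.trans_le hu.1) hu.2)

lemma nestInt_succ_le {n j m : ℕ} {C p : ℝ} (ha : 0 < a) (hax : a ≤ x)
    (hC : ∀ u ∈ Set.Icc a x, nestInt β x n (j + 1) u ≤ C * u ^ p * (1 + log (x / u)) ^ m) :
    nestInt β x (n + 1) j a ≤ C * ∫ u in a..x, u ^ (β j + p) * (1 + log (x / u)) ^ m := by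
  rw [nestInt, ← intervalIntegral.integral_const_mul]
  refine integral_mono_on_of_nonneg hax (fun u hu => ?_) ?_ (fun u hu => ?_)
  · exact mul_nonneg (rpow_nonneg (ha.trans_le hu.1).le _)
      (nestInt_nonneg β n _ (ha.trans_le hu.1) hu.2)
  · simpa using (intervalIntegrable_rpow_mul_one_add_log (β j + p + 1) m ha hax).const_mul C
  · have hu0 : 0 < u := ha.trans_le hu.1
    calc u ^ β j * nestInt β x n (j + 1) u
        ≤ u ^ β j * (C * u ^ p * (1 + log (x / u)) ^ m) := by gcongr; exact hC u hu
      _ = C * (u ^ (β j + p) * (1 + log (x / u)) ^ m) := by rw [rpow_add hu0]; ring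

theorem nestInt_le_windowMax (k n s : ℕ) (hsn : s + n = k) :
    ∃ C, 0 ≤ C ∧ ∀ x a : ℝ, 0 < a → a ≤ x →
      nestInt β x n (s + 1) a ≤ C * x ^ ((k : ℝ) + windowMax (maxF k β) s n) *
        a ^ (maxF k β s - windowMax (maxF k β) s n) *
        (1 + log (x / a)) ^ (windowMaxCount (maxF k β) s n - 1) := by
  induction n generalizing s with
  | zero =>
    refine ⟨1, zero_le_one, fun x a _ _ => ?_⟩
    rw [windowMax_zero, windowMaxCount_zero, sub_self, ← hsn, add_zero, maxF_self]
    simp [nestInt]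
  | succ n ih =>
    set f := maxF k β
    set M := windowMax f (s + 1) n
    set R := windowMaxCount f (s + 1) n
    obtain ⟨C, hC0, hC⟩ := ih (s + 1) (by omega)
    have hrec : f s = f (s + 1) + (β (s + 1) + 1) := maxF_eq_maxF_succ_add β (by omega)
    have hstep : ∀ x a b : ℝ, 0 < a → a ≤ x →
        ∫ u in a..x, u ^ (f s - M - 1) * (1 + log (x / u)) ^ (R - 1) ≤ b →
        nestInt β x (n + 1) (s + 1) a ≤ C * x ^ ((k : ℝ) + M) * b := by
      intro x a b ha hax hb
      have := nestInt_succ_le β ha hax fun u hu => hC x u (ha.trans_le hu.1) hu.2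
      rw [show β (s + 1) + (f (s + 1) - M) = f s - M - 1 by linarith] at this
      exact this.trans (mul_le_mul_of_nonneg_left hb
        (mul_nonneg hC0 (rpow_nonneg (ha.trans_le hax).le _)))
    rcases lt_trichotomy (f s) M with h | h | h
    · refine ⟨C / (M - f s), div_nonneg hC0 (by linarith), fun x a ha hax => ?_⟩
      refine (hstep x a _ ha hax
        (integral_rpow_mul_one_add_log_le_of_neg (by linarith) _ ha hax)).trans_eq ?_
      rw [windowMaxCount_succ_of_lt f h, windowMax_succ, max_eq_right h.le, neg_sub]
      ring
    · refine ⟨C, hC0, fun x a ha hax => ?_⟩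
      refine (hstep x a _ ha hax
        (integral_rpow_mul_one_add_log_le_of_eq_zero (sub_eq_zero.2 h) _ ha hax)).trans_eq ?_
      rw [windowMaxCount_succ_of_eq f h, windowMax_succ, max_eq_left h.ge, h, sub_self, rpow_zero,
        mul_one, Nat.add_sub_cancel, Nat.sub_add_cancel (windowMaxCount_pos f _ _)]
    · obtain ⟨K, hK0, hK⟩ := exists_integral_rpow_mul_one_add_log_le_of_pos (sub_pos.2 h) (R - 1)
      refine ⟨C * K, mul_nonneg hC0 hK0, fun x a ha hax => ?_⟩
      refine (hstep x a _ ha hax (hK a x ha hax)).trans_eq ?_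
      rw [windowMaxCount_succ_of_gt f h, windowMax_succ, max_eq_left h.le, sub_self, rpow_zero,
        Nat.sub_self, pow_zero, mul_one, mul_one, mul_mul_mul_comm, ← rpow_add (ha.trans_le hax),
        add_add_sub_cancel]

end NestedIntegral

theorem nested_integral_upper_bound_general (k : ℕ) (β : ℕ → ℝ) :
    ∃ C₂ : ℝ, ∀ t : ℝ, 2 ≤ t →
      nestInt β t k 1 1 ≤ C₂ * t ^ ((k : ℝ) + maxB k β) * (Real.log t) ^ (numMax k β - 1) := by
  obtain ⟨C, hC0, hC⟩ := nestInt_le_windowMax β k k 0 (zero_add k)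
  refine ⟨C * (1 + (log 2)⁻¹) ^ (numMax k β - 1), fun t ht => ?_⟩
  have hbound := hC t 1 one_pos (by linarith)
  rw [← maxB_eq_windowMax, ← numMax_eq_windowMaxCount, one_rpow, mul_one, div_one] at hbound
  calc nestInt β t k 1 1 ≤ C * t ^ ((k : ℝ) + maxB k β) * (1 + log t) ^ (numMax k β - 1) :=
        hbound
    _ ≤ C * t ^ ((k : ℝ) + maxB k β) * ((1 + (log 2)⁻¹) * log t) ^ (numMax k β - 1) := by
        gcongr
        · linarith [log_nonneg (show (1 : ℝ) ≤ t by linarith)]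
        · exact one_add_log_le_mul_log one_lt_two ht
    _ = _ := by rw [mul_pow]; ring

theorem nested_integral_upper_bound (k : ℕ) (hk : 1 ≤ k) (β : ℕ → ℝ) :
    ∃ C₂ : ℝ, ∀ t : ℝ, 2 ≤ t →
      nestInt β t k 1 1 ≤ C₂ * t ^ ((k : ℝ) + maxB k β) * (Real.log t) ^ (numMax k β - 1) :=
  nested_integral_upper_bound_general k β
end

section
/- Let χ ∈ (0, 1/2) be a real number and define, for t ≥ 1, T(t) = ∫₁^t u^{2χ−2} ( ∫_u^t v^{−1} ( ∫_v^t w^{−2χ} dw ) dv ) du. Then lim_{t→∞} T(t) / ( t^{1−2χ} log t ) = 1/(1−2χ)². -/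
open Real MeasureTheory intervalIntegral Filter

/-! With `a = 1 - 2χ > 0` all three integrals are elementary: evaluated from the inside out they
give `T(t) = ((1 + t^a) log t + 2 (1 - t^a) / a) / a²`, whose leading term is `t^a log t / a²`. -/

section
variable {a : ℝ}

theorem integral_rpow_sub_one_of_pos (ha : 0 < a) (x y : ℝ) :
    ∫ w in x..y, w ^ (a - 1) = (y ^ a - x ^ a) / a := by
  rw [integral_rpow (Or.inl (by linarith)), sub_add_cancel]

theorem integral_rpow_neg_one_mul_rpow_sub (ha : a ≠ 0) {u t : ℝ} (hu : 0 < u) (ht : 0 < t) :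
    ∫ v in u..t, v ^ (-1 : ℝ) * ((t ^ a - v ^ a) / a)
      = (t ^ a * (log t - log u) - (t ^ a - u ^ a) / a) / a := by
  have hne : ∀ x ∈ Set.uIcc u t, x ≠ 0 := fun x hx => (lt_of_lt_of_le (lt_min hu ht) hx.1).ne'
  have hderiv : ∀ x ∈ Set.uIcc u t, HasDerivAt (fun v => (t ^ a * log v - v ^ a / a) / a)
      (x ^ (-1 : ℝ) * ((t ^ a - x ^ a) / a)) x := by
    intro x hx
    refine ((((hasDerivAt_log (hne x hx)).const_mul (t ^ a)).sub
      ((hasDerivAt_rpow_const (p := a) (Or.inl (hne x hx))).div_const a)).div_const a).congr_deriv ?_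
    rw [rpow_neg_one, rpow_sub_one (hne x hx)]
    field_simp
  rw [integral_eq_sub_of_hasDerivAt hderiv]
  · ring
  · exact ContinuousOn.intervalIntegrable
      (by fun_prop (disch := first | exact fun x hx => Or.inl (hne x hx) | exact hne))

theorem integral_one_rpow_neg_sub_one_mul (ha : a ≠ 0) {t : ℝ} (ht : 0 < t) :
    ∫ u in (1 : ℝ)..t, u ^ (-a - 1) * ((t ^ a * (log t - log u) - (t ^ a - u ^ a) / a) / a)
      = ((1 + t ^ a) * log t + 2 * (1 - t ^ a) / a) / a ^ 2 := by
  have hpos : ∀ x ∈ Set.uIcc 1 t, 0 < x := fun x hx => lt_of_lt_of_le (lt_min one_pos ht) hx.1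
  have hne : ∀ x ∈ Set.uIcc 1 t, x ≠ 0 := fun x hx => (hpos x hx).ne'
  have hderiv : ∀ x ∈ Set.uIcc 1 t,
      HasDerivAt (fun u => (t ^ a * u ^ (-a) * (log u - log t + 2 / a) + log u) / a ^ 2)
        (x ^ (-a - 1) * ((t ^ a * (log t - log x) - (t ^ a - x ^ a) / a) / a)) x := by
    intro x hx
    have hx0 := hne x hx
    refine (((((hasDerivAt_rpow_const (p := -a) (Or.inl hx0)).const_mul (t ^ a)).mul
      (((hasDerivAt_log hx0).sub_const (log t)).add_const (2 / a))).add
      (hasDerivAt_log hx0)).div_const (a ^ 2)).congr_deriv ?_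
    have hinv : x⁻¹ = x ^ (-a - 1) * x ^ a := by
      rw [← rpow_add (hpos x hx), show -a - 1 + a = -1 by ring, rpow_neg_one]
    have hsub : x ^ (-a) * x⁻¹ = x ^ (-a - 1) := by rw [rpow_sub_one hx0, div_eq_mul_inv]
    rw [mul_assoc (t ^ a) (x ^ (-a)), hsub, hinv]
    field_simp
    ring
  rw [integral_eq_sub_of_hasDerivAt hderiv]
  · have hcancel : t ^ a * t ^ (-a) = 1 := by rw [← rpow_add ht, add_neg_cancel, rpow_zero]
    simp only [one_rpow, log_one, mul_one, hcancel]
    field_simp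
    ring
  · exact ContinuousOn.intervalIntegrable (by
      fun_prop (disch := first | exact fun x hx => Or.inl (hne x hx) | exact hne | exact ha))

/-- The triple integral `T(t)` of the statement, written with `a = 1 - 2χ`. -/
noncomputable def triangleIntegral (a t : ℝ) : ℝ :=
  ∫ u in (1 : ℝ)..t, u ^ (-a - 1) * ∫ v in u..t, v ^ (-1 : ℝ) * ∫ w in v..t, w ^ (a - 1)

theorem triangleIntegral_eq (ha : 0 < a) {t : ℝ} (ht : 0 < t) :
    triangleIntegral a t = ((1 + t ^ a) * log t + 2 * (1 - t ^ a) / a) / a ^ 2 := by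
  rw [triangleIntegral, ← integral_one_rpow_neg_sub_one_mul ha.ne' ht]
  refine integral_congr fun u hu => ?_
  have hu0 : 0 < u := lt_of_lt_of_le (lt_min one_pos ht) hu.1
  simp only [integral_rpow_sub_one_of_pos ha, integral_rpow_neg_one_mul_rpow_sub ha.ne' hu0 ht]

theorem tendsto_closedForm_div_rpow_mul_log (ha : 0 < a) :
    Tendsto (fun t => ((1 + t ^ a) * log t + 2 * (1 - t ^ a) / a) / a ^ 2 / (t ^ a * log t))
      atTop (nhds (1 / a ^ 2)) := by
  have hlim : Tendsto (fun t => (t ^ (-a) + 1 + 2 / a * (t ^ (-a) - 1) * (log t)⁻¹) / a ^ 2)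
      atTop (nhds ((0 + 1 + 2 / a * (0 - 1) * 0) / a ^ 2)) := by
    have hpow := tendsto_rpow_neg_atTop ha
    have hlog := tendsto_inv_atTop_zero.comp tendsto_log_atTop
    exact ((hpow.add_const 1).add (((hpow.sub_const 1).const_mul (2 / a)).mul hlog)).div_const _
  rw [show (0 + 1 + 2 / a * (0 - 1) * 0) / a ^ 2 = 1 / a ^ 2 by ring] at hlim
  refine hlim.congr' ?_
  filter_upwards [eventually_gt_atTop 1] with t ht
  have hlog := log_pos ht
  have hta := rpow_pos_of_pos (one_pos.trans ht) a
  rw [rpow_neg (one_pos.trans ht).le]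
  field_simp

theorem tendsto_triangleIntegral_div (ha : 0 < a) :
    Tendsto (fun t => triangleIntegral a t / (t ^ a * log t)) atTop (nhds (1 / a ^ 2)) := by
  refine (tendsto_closedForm_div_rpow_mul_log ha).congr' ?_
  filter_upwards [eventually_gt_atTop 0] with t ht
  rw [triangleIntegral_eq ha ht]

end

theorem triangle_integral_tau_in_two_three_general (χ : ℝ) (h2 : χ < 1 / 2) :
    Filter.Tendsto
      (fun t : ℝ =>
        (∫ u in (1:ℝ)..t, u ^ (2 * χ - 2) *
          ∫ v in u..t, v ^ (-1 : ℝ) *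
            ∫ w in v..t, w ^ (-(2 * χ))) / (t ^ (1 - 2 * χ) * Real.log t))
      Filter.atTop (nhds (1 / (1 - 2 * χ) ^ 2)) := by
  have ha : 0 < 1 - 2 * χ := by linarith
  have hinner : -(2 * χ) = (1 - 2 * χ) - 1 := by ring
  have houter : 2 * χ - 2 = -(1 - 2 * χ) - 1 := by ring
  simp only [hinner, houter]
  exact tendsto_triangleIntegral_div ha

theorem triangle_integral_tau_in_two_three (χ : ℝ) (h1 : 0 < χ) (h2 : χ < 1 / 2) :
    Filter.Tendsto
      (fun t : ℝ =>
        (∫ u in (1:ℝ)..t, u ^ (2 * χ - 2) *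
          ∫ v in u..t, v ^ (-1 : ℝ) *
            ∫ w in v..t, w ^ (-(2 * χ))) / (t ^ (1 - 2 * χ) * Real.log t))
      Filter.atTop (nhds (1 / (1 - 2 * χ) ^ 2)) :=
  triangle_integral_tau_in_two_three_general χ h2
end

section
/- Fix an integer m ≥ 1 and a real δ > −m. Let ψ₂, ψ₃, … be independent random variables with ψ_k distributed as Beta(m+δ, m(2k−3)+(k−1)δ). Then for every ε > 0 there exists K = K(ε) ∈ ℕ such that P( for all k ≥ K: ψ_k ≤ (log k)² / ((2m+δ) k) ) ≥ 1 − ε. -/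
open Real MeasureTheory ProbabilityTheory Finset

/-- The Beta(a,b) distribution: the measure on ℝ supported on (0,1) with density
`x^(a-1) (1-x)^(b-1) / B(a,b)` where `B(a,b) = Γ(a)Γ(b)/Γ(a+b)`. -/
noncomputable def betaMeasure (a b : ℝ) : Measure ℝ :=
  MeasureTheory.volume.withDensity
    (Set.indicator (Set.Ioo 0 1) fun x =>
      ENNReal.ofReal (x ^ (a - 1) * (1 - x) ^ (b - 1) /
        (Real.Gamma a * Real.Gamma b / Real.Gamma (a + b))))

open Filter Topology

/-!
A union bound suffices. Put `t = (log k)² / ((2m+δ)k)` and `b = m(2k-3) + (k-1)δ`. On `(t, 1)`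
the factor `(1-x)^(b-1)` of the Beta density is at most `e^{-(b-1)t}`, while on `(0, 1/b)` it is
at least `(1 - 1/b)^(b-1) ≥ e⁻¹`, which bounds the normalising constant from below. Together,
`P(ψ_k > t) ≤ e · b^(m+δ) · e^{-(b-1)t} ≈ k^{O(1)} e^{-(log k)²/2}`, eventually below `1/k²`, and
the tails of `∑ 1/k²` make the probability of any exceedance after `K` small.
-/

lemma betaMeasure_eq (a b : ℝ) :
    _root_.betaMeasure a b = ProbabilityTheory.betaMeasure a b := by
  rw [_root_.betaMeasure, ProbabilityTheory.betaMeasure]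
  congr 1
  funext x
  by_cases hx : x ∈ Set.Ioo (0 : ℝ) 1
  · rw [Set.indicator_of_mem hx, betaPDF_of_pos_lt_one hx.1 hx.2, ProbabilityTheory.beta]
    ring_nf
  · rw [Set.indicator_of_notMem hx, betaPDF, betaPDFReal,
      if_neg (show ¬(0 < x ∧ x < 1) from hx), ENNReal.ofReal_zero]

lemma isProbabilityMeasure_betaMeasure {a b : ℝ} (ha : 0 < a) (hb : 0 < b) :
    IsProbabilityMeasure (_root_.betaMeasure a b) :=
  betaMeasure_eq a b ▸ isProbabilityMeasureBeta ha hb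

lemma betaMeasure_apply (a b : ℝ) {s : Set ℝ} (hs : MeasurableSet s) :
    _root_.betaMeasure a b s =
      ∫⁻ x in s ∩ Set.Ioo 0 1, ENNReal.ofReal (x ^ (a - 1) * (1 - x) ^ (b - 1) / beta a b) := by
  rw [_root_.betaMeasure, withDensity_apply _ hs, lintegral_indicator measurableSet_Ioo,
    Measure.restrict_restrict measurableSet_Ioo, Set.inter_comm]
  rfl

lemma lintegral_rpow_Ioo {a s : ℝ} (ha : 0 < a) (hs : 0 < s) :
    ∫⁻ x in Set.Ioo 0 s, ENNReal.ofReal (x ^ (a - 1)) = ENNReal.ofReal (s ^ a / a) := by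
  rw [← ofReal_integral_eq_lintegral_ofReal
      ((intervalIntegral.integrableOn_Ioo_rpow_iff hs).2 (by linarith))
      (ae_restrict_of_forall_mem measurableSet_Ioo fun x hx => rpow_nonneg hx.1.le _),
    ← integral_Ioc_eq_integral_Ioo, ← intervalIntegral.integral_of_le hs.le,
    integral_rpow (Or.inl (by linarith)), sub_add_cancel, zero_rpow ha.ne', sub_zero]

lemma one_sub_rpow_le_exp {x r : ℝ} (hx : x ≤ 1) (hr : 0 ≤ r) :
    (1 - x) ^ r ≤ exp (-(r * x)) := by
  calc (1 - x) ^ r ≤ exp (-x) ^ r := rpow_le_rpow (by linarith) (one_sub_le_exp_neg x) hr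
    _ = exp (-(r * x)) := by rw [← exp_mul]; ring_nf

lemma exp_neg_one_le_one_sub_inv_rpow {b : ℝ} (hb : 1 ≤ b) : exp (-1) ≤ (1 - b⁻¹) ^ (b - 1) := by
  rcases hb.eq_or_lt with rfl | hb
  · simp
  have hpos : 0 < 1 - b⁻¹ := sub_pos.2 (inv_lt_one_of_one_lt₀ hb)
  have hlog : -1 ≤ (b - 1) * log (1 - b⁻¹) := by
    have h := one_sub_inv_le_log_of_pos hpos
    have hinv : (1 - b⁻¹)⁻¹ = b / (b - 1) := by field_simp
    rw [hinv] at h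
    have hb1 : 0 < b - 1 := by linarith
    calc -1 = (b - 1) * (1 - b / (b - 1)) := by field_simp; ring
      _ ≤ (b - 1) * log (1 - b⁻¹) := mul_le_mul_of_nonneg_left h hb1.le
  rw [rpow_def_of_pos hpos, exp_le_exp, mul_comm]
  exact hlog

lemma betaMeasure_Ioi_le {a b : ℝ} (ha : 0 < a) (hb : 1 ≤ b) (t : ℝ) :
    _root_.betaMeasure a b (Set.Ioi t) ≤ ENNReal.ofReal (exp (-((b - 1) * t)) / (a * beta a b)) := by
  have hB : 0 < beta a b := beta_pos ha (by linarith)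
  have hC : 0 ≤ exp (-((b - 1) * t)) / beta a b := div_nonneg (exp_pos _).le hB.le
  rw [betaMeasure_apply a b measurableSet_Ioi]
  calc ∫⁻ x in Set.Ioi t ∩ Set.Ioo 0 1, ENNReal.ofReal (x ^ (a - 1) * (1 - x) ^ (b - 1) / beta a b)
      ≤ ∫⁻ x in Set.Ioi t ∩ Set.Ioo 0 1,
          ENNReal.ofReal (exp (-((b - 1) * t)) / beta a b) * ENNReal.ofReal (x ^ (a - 1)) := by
        refine setLIntegral_mono (by fun_prop) fun x hx => ?_
        rw [← ENNReal.ofReal_mul hC]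
        refine ENNReal.ofReal_le_ofReal ?_
        have hxt : t < x := hx.1
        have hdecay : (1 - x) ^ (b - 1) ≤ exp (-((b - 1) * t)) :=
          (one_sub_rpow_le_exp hx.2.2.le (by linarith)).trans
            (exp_le_exp.2 (by nlinarith))
        rw [div_mul_eq_mul_div, mul_comm (exp _)]
        gcongr
        exact rpow_nonneg hx.2.1.le _
    _ ≤ ∫⁻ x in Set.Ioo 0 1,
          ENNReal.ofReal (exp (-((b - 1) * t)) / beta a b) * ENNReal.ofReal (x ^ (a - 1)) :=
        lintegral_mono_set Set.inter_subset_right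
    _ = ENNReal.ofReal (exp (-((b - 1) * t)) / (a * beta a b)) := by
        rw [lintegral_const_mul' _ _ ENNReal.ofReal_ne_top, lintegral_rpow_Ioo ha one_pos,
          ← ENNReal.ofReal_mul hC, one_rpow]
        congr 1
        field_simp

lemma le_betaMeasure_Iio {a b s : ℝ} (ha : 0 < a) (hb : 1 ≤ b) (hs₀ : 0 < s) (hs₁ : s ≤ 1) :
    ENNReal.ofReal ((1 - s) ^ (b - 1) * s ^ a / (a * beta a b)) ≤
      _root_.betaMeasure a b (Set.Iio s) := by
  have hB : 0 < beta a b := beta_pos ha (by linarith)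
  have hC : 0 ≤ (1 - s) ^ (b - 1) / beta a b := div_nonneg (rpow_nonneg (by linarith) _) hB.le
  have hset : Set.Iio s ∩ Set.Ioo 0 1 = Set.Ioo 0 s := by
    ext x
    simp only [Set.mem_inter_iff, Set.mem_Iio, Set.mem_Ioo]
    constructor
    · rintro ⟨hxs, hx₀, -⟩
      exact ⟨hx₀, hxs⟩
    · rintro ⟨hx₀, hxs⟩
      exact ⟨hxs, hx₀, hxs.trans_le hs₁⟩
  rw [betaMeasure_apply a b measurableSet_Iio, hset]
  calc ENNReal.ofReal ((1 - s) ^ (b - 1) * s ^ a / (a * beta a b))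
      = ∫⁻ x in Set.Ioo 0 s,
          ENNReal.ofReal ((1 - s) ^ (b - 1) / beta a b) * ENNReal.ofReal (x ^ (a - 1)) := by
        rw [lintegral_const_mul' _ _ ENNReal.ofReal_ne_top, lintegral_rpow_Ioo ha hs₀,
          ← ENNReal.ofReal_mul hC]
        congr 1
        field_simp
    _ ≤ ∫⁻ x in Set.Ioo 0 s, ENNReal.ofReal (x ^ (a - 1) * (1 - x) ^ (b - 1) / beta a b) := by
        refine setLIntegral_mono (by fun_prop) fun x hx => ?_
        rw [← ENNReal.ofReal_mul hC]
        refine ENNReal.ofReal_le_ofReal ?_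
        have hmono : (1 - s) ^ (b - 1) ≤ (1 - x) ^ (b - 1) :=
          rpow_le_rpow (by linarith) (by linarith [hx.2]) (by linarith)
        rw [div_mul_eq_mul_div, mul_comm _ (x ^ _)]
        gcongr
        exact rpow_nonneg hx.1.le _

lemma exp_neg_one_mul_rpow_neg_le_mul_beta {a b : ℝ} (ha : 0 < a) (hb : 1 ≤ b) :
    exp (-1) * b ^ (-a) ≤ a * beta a b := by
  have hb₀ : 0 < b := by linarith
  have := isProbabilityMeasure_betaMeasure ha hb₀
  have hmass := (le_betaMeasure_Iio ha hb (inv_pos.2 hb₀) (inv_le_one_of_one_le₀ hb)).trans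
    prob_le_one
  rw [ENNReal.ofReal_le_one, div_le_one (mul_pos ha (beta_pos ha hb₀)), inv_rpow hb₀.le,
    ← rpow_neg hb₀.le] at hmass
  calc exp (-1) * b ^ (-a) ≤ (1 - b⁻¹) ^ (b - 1) * b ^ (-a) :=
        mul_le_mul_of_nonneg_right (exp_neg_one_le_one_sub_inv_rpow hb) (by positivity)
    _ ≤ a * beta a b := hmass

lemma betaMeasure_Ioi_le_exp {a b : ℝ} (ha : 0 < a) (hb : 1 ≤ b) (t : ℝ) :
    _root_.betaMeasure a b (Set.Ioi t) ≤
      ENNReal.ofReal (exp 1 * b ^ a * exp (-((b - 1) * t))) := by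
  have hb₀ : 0 < b := by linarith
  refine (betaMeasure_Ioi_le ha hb t).trans (ENNReal.ofReal_le_ofReal ?_)
  rw [div_le_iff₀ (mul_pos ha (beta_pos ha hb₀))]
  have hnorm : exp 1 * b ^ a * (exp (-1) * b ^ (-a)) = 1 := by
    rw [rpow_neg hb₀.le, exp_neg]
    field_simp
  calc exp (-((b - 1) * t))
      = exp (-((b - 1) * t)) * (exp 1 * b ^ a * (exp (-1) * b ^ (-a))) := by rw [hnorm, mul_one]
    _ ≤ exp (-((b - 1) * t)) * (exp 1 * b ^ a * (a * beta a b)) := by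
        gcongr exp (-((b - 1) * t)) * (exp 1 * b ^ a * ?_)
        exact exp_neg_one_mul_rpow_neg_le_mul_beta ha hb
    _ = exp 1 * b ^ a * exp (-((b - 1) * t)) * (a * beta a b) := by ring

lemma eventually_add_mul_le_sq_div_two (C D : ℝ) : ∀ᶠ x : ℝ in atTop, C + D * x ≤ x ^ 2 / 2 := by
  filter_upwards [eventually_ge_atTop (2 * (|C| + |D|) + 1)] with x hx
  have hx₁ : 1 ≤ x := by linarith [abs_nonneg C, abs_nonneg D]
  nlinarith [le_abs_self C, le_abs_self D, abs_nonneg C, abs_nonneg D]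

lemma eventually_exp_mul_rpow_mul_exp_le_inv_sq {a c d : ℝ} (ha : 0 ≤ a) (hc : 0 < c)
    (hd : 0 ≤ d) :
    ∀ᶠ k : ℕ in atTop,
      exp 1 * (c * k - d) ^ a * exp (-((c * k - d - 1) * (log k ^ 2 / (c * k)))) ≤ 1 / k ^ 2 := by
  filter_upwards [eventually_ge_atTop 1,
    tendsto_natCast_atTop_atTop.eventually_ge_atTop (2 * (d + 1) / c),
    (tendsto_log_atTop.comp tendsto_natCast_atTop_atTop).eventually
      (eventually_add_mul_le_sq_div_two (1 + a * log c) (a + 2))] with k hk₁ hk hlog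
  have hk₀ : (0 : ℝ) < k := by exact_mod_cast hk₁
  have hck : 0 < c * k := mul_pos hc hk₀
  have hhalf : c * k / 2 ≤ c * k - d - 1 := by
    rw [div_le_iff₀ hc] at hk
    linarith
  have hexponent : log k ^ 2 / 2 ≤ (c * k - d - 1) * (log k ^ 2 / (c * k)) :=
    calc log k ^ 2 / 2 = c * k / 2 * (log k ^ 2 / (c * k)) := by field_simp
      _ ≤ (c * k - d - 1) * (log k ^ 2 / (c * k)) := by gcongr
  calc exp 1 * (c * k - d) ^ a * exp (-((c * k - d - 1) * (log k ^ 2 / (c * k))))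
      ≤ exp 1 * (c * k) ^ a * exp (-(log k ^ 2 / 2)) := by
        gcongr
        · linarith
        · linarith
    _ = exp (1 + a * log c + a * log k - log k ^ 2 / 2) := by
        rw [rpow_def_of_pos hck, log_mul hc.ne' hk₀.ne', ← exp_add, ← exp_add]
        ring_nf
    _ ≤ exp (-(2 * log k)) := exp_le_exp.2 (by simp only [Function.comp_apply] at hlog; linarith)
    _ = 1 / k ^ 2 := by
        rw [exp_neg, mul_comm, exp_mul, exp_log hk₀, rpow_two, one_div]

lemma tendsto_measure_iUnion_ge_zero {Ω : Type*} [MeasurableSpace Ω] (μ : Measure Ω)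
    {s : ℕ → Set Ω} {u : ℕ → ℝ} (hu : Summable u)
    (hsu : ∀ᶠ k in atTop, μ (s k) ≤ ENNReal.ofReal (u k)) :
    Tendsto (fun K => μ (⋃ k ≥ K, s k)) atTop (𝓝 0) := by
  refine tendsto_of_tendsto_of_tendsto_of_le_of_le' tendsto_const_nhds
    (ENNReal.tendsto_sum_nat_add _ hu.tsum_ofReal_ne_top) (Eventually.of_forall fun _ => bot_le) ?_
  obtain ⟨N, hN⟩ := eventually_atTop.1 hsu
  filter_upwards [eventually_ge_atTop N] with K hK
  calc μ (⋃ k ≥ K, s k) = μ (⋃ j, s (j + K)) := by rw [Set.iUnion_ge_eq_iUnion_nat_add]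
    _ ≤ ∑' j, μ (s (j + K)) := measure_iUnion_le _
    _ ≤ ∑' j, ENNReal.ofReal (u (j + K)) :=
        ENNReal.tsum_le_tsum fun j => hN _ (hK.trans (Nat.le_add_left K j))

lemma eventually_measure_forall_ge_ge {Ω : Type*} [MeasurableSpace Ω] (μ : Measure Ω)
    [IsProbabilityMeasure μ] {p : ℕ → Ω → Prop} {u : ℕ → ℝ} (hu : Summable u)
    (hpu : ∀ᶠ k in atTop, μ {ω | ¬p k ω} ≤ ENNReal.ofReal (u k)) {ε : ℝ} (hε : 0 < ε) :
    ∀ᶠ K in atTop, ENNReal.ofReal (1 - ε) ≤ μ {ω | ∀ k, K ≤ k → p k ω} := by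
  filter_upwards [(tendsto_measure_iUnion_ge_zero μ hu hpu).eventually
    (eventually_le_nhds (ENNReal.ofReal_pos.2 hε))] with K hK
  calc ENNReal.ofReal (1 - ε) = 1 - ENNReal.ofReal ε := by
        rw [ENNReal.ofReal_sub _ hε.le, ENNReal.ofReal_one]
    _ ≤ 1 - μ (⋃ k ≥ K, {ω | ¬p k ω}) := tsub_le_tsub_left hK 1
    _ ≤ μ (⋃ k ≥ K, {ω | ¬p k ω})ᶜ := by
        rw [tsub_le_iff_left, ← measure_univ (μ := μ)]
        exact measure_univ_le_add_compl _
    _ = μ {ω | ∀ k, K ≤ k → p k ω} := by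
        congr 1
        ext ω
        simp

theorem intensity_coupling_bound_general {Ω : Type*} [MeasurableSpace Ω]
    (P : Measure Ω) [IsProbabilityMeasure P]
    (m : ℕ) (δ : ℝ) (hδ : -(m : ℝ) < δ)
    (ψ : ℕ → Ω → ℝ) (hmeas : ∀ k, Measurable (ψ k))
    (hdist : ∀ k : ℕ, 2 ≤ k →
      Measure.map (ψ k) P =
        _root_.betaMeasure ((m : ℝ) + δ) ((m : ℝ) * (2 * (k : ℝ) - 3) + ((k : ℝ) - 1) * δ)) :
    ∀ ε : ℝ, 0 < ε → ∃ K : ℕ, 2 ≤ K ∧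
      ENNReal.ofReal (1 - ε) ≤
        P {a | ∀ k : ℕ, K ≤ k →
          ψ k a ≤ (Real.log k) ^ 2 / ((2 * (m : ℝ) + δ) * k)} := by
  intro ε hε
  set c := 2 * (m : ℝ) + δ
  have hA : 0 < (m : ℝ) + δ := by linarith
  have hc : 0 < c := by linarith [m.cast_nonneg (α := ℝ)]
  have hbad : ∀ᶠ k : ℕ in atTop,
      P {ω | ¬ψ k ω ≤ log k ^ 2 / (c * k)} ≤ ENNReal.ofReal (1 / k ^ 2) := by
    filter_upwards [eventually_ge_atTop 2,
      tendsto_natCast_atTop_atTop.eventually_ge_atTop ((c + m + 1) / c),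
      eventually_exp_mul_rpow_mul_exp_le_inv_sq (d := c + m) hA.le hc (by positivity)]
      with k hk₂ hkc hdecay
    have hb₁ : 1 ≤ c * k - (c + m) := by
      rw [div_le_iff₀ hc] at hkc
      linarith
    have hlaw := hdist k hk₂
    rw [show (m : ℝ) * (2 * (k : ℝ) - 3) + ((k : ℝ) - 1) * δ = c * k - (c + m) by ring] at hlaw
    simp_rw [not_le]
    calc P {ω | log k ^ 2 / (c * k) < ψ k ω}
        = _root_.betaMeasure ((m : ℝ) + δ) (c * k - (c + m)) (Set.Ioi (log k ^ 2 / (c * k))) := by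
          rw [← hlaw, Measure.map_apply (hmeas k) measurableSet_Ioi]
          rfl
      _ ≤ ENNReal.ofReal (1 / k ^ 2) :=
          (betaMeasure_Ioi_le_exp hA hb₁ _).trans (ENNReal.ofReal_le_ofReal hdecay)
  obtain ⟨K, hK, hK₂⟩ := ((eventually_measure_forall_ge_ge P
    (summable_one_div_nat_pow.2 one_lt_two) hbad hε).and (eventually_ge_atTop 2)).exists
  exact ⟨K, hK₂, hK⟩

theorem intensity_coupling_bound {Ω : Type*} [MeasurableSpace Ω]
    (P : Measure Ω) [IsProbabilityMeasure P]
    (m : ℕ) (hm : 1 ≤ m) (δ : ℝ) (hδ : -(m : ℝ) < δ)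
    (ψ : ℕ → Ω → ℝ) (hmeas : ∀ k, Measurable (ψ k))
    (hindep : ProbabilityTheory.iIndepFun (fun k : ℕ => ψ (k + 2)) P)
    (hdist : ∀ k : ℕ, 2 ≤ k →
      Measure.map (ψ k) P =
        _root_.betaMeasure ((m : ℝ) + δ) ((m : ℝ) * (2 * (k : ℝ) - 3) + ((k : ℝ) - 1) * δ)) :
    ∀ ε : ℝ, 0 < ε → ∃ K : ℕ, 2 ≤ K ∧
      ENNReal.ofReal (1 - ε) ≤
        P {a | ∀ k : ℕ, K ≤ k →
          ψ k a ≤ (Real.log k) ^ 2 / ((2 * (m : ℝ) + δ) * k)} :=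
  intensity_coupling_bound_general P m δ hδ ψ hmeas hdist
end
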